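/- The function z(t) = ((7-√33)/4 · sin(t/2), cos(t/2))ᵀ is such that x₀(t) = R(t)z(t) is a nonzero solution of A(3/4,0)x = 0 with anti-periodic boundary conditions x(t+2π) = -x(t); in particular, x₀ ∈ ker A(3/4, 0). -/

import Mathlib

open Matrix Real

/-- The rotation matrix R(t). -/
noncomputable def Rmat (t : ℝ) : Matrix (Fin 2) (Fin 2) ℝ :=
  !![cos t, -sin t; sin t, cos t]

/-- The symmetric matrix S(t). -/
noncomputable def Smat (t : ℝ) : Matrix (Fin 2) (Fin 2) ℝ :=
  !![cos (2 * t), sin (2 * t); sin (2 * t), -cos (2 * t)]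

/-- z(t) = ((7-√33)/4 sin(t/2), cos(t/2))ᵀ. -/
noncomputable def zvec (t : ℝ) : Fin 2 → ℝ :=
  ![(7 - Real.sqrt 33) / 4 * sin (t / 2), cos (t / 2)]

/-- x₀(t) = R(t)z(t). -/
noncomputable def x₀ (t : ℝ) : Fin 2 → ℝ := (Rmat t).mulVec (zvec t)

noncomputable def cc : ℝ := (7 - Real.sqrt 33) / 4

noncomputable def F1 (t : ℝ) : ℝ := cc * sin (t/2) * cos t - cos (t/2) * sin t
noncomputable def F2 (t : ℝ) : ℝ := cc * sin (t/2) * sin t + cos (t/2) * cos t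
noncomputable def G1 (t : ℝ) : ℝ :=
  cc/2 * cos (t/2) * cos t - cc * sin (t/2) * sin t
    + 1/2 * sin (t/2) * sin t - cos (t/2) * cos t
noncomputable def G2 (t : ℝ) : ℝ :=
  cc/2 * cos (t/2) * sin t + cc * sin (t/2) * cos t
    - 1/2 * sin (t/2) * cos t - cos (t/2) * sin t
noncomputable def H1 (t : ℝ) : ℝ :=
  -(5*cc/4) * sin (t/2) * cos t - cc * cos (t/2) * sin t
    + sin (t/2) * cos t + 5/4 * cos (t/2) * sin t
noncomputable def H2 (t : ℝ) : ℝ :=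
  -(5*cc/4) * sin (t/2) * sin t + cc * cos (t/2) * cos t
    + sin (t/2) * sin t - 5/4 * cos (t/2) * cos t

lemma hs2 (t : ℝ) : HasDerivAt (fun t : ℝ => sin (t/2)) (cos (t/2) * (1/2)) t := by
  have := (Real.hasDerivAt_sin (t/2)).comp t ((hasDerivAt_id t).div_const 2)
  simpa [Function.comp_def] using this

lemma hc2 (t : ℝ) : HasDerivAt (fun t : ℝ => cos (t/2)) (-sin (t/2) * (1/2)) t := by
  have := (Real.hasDerivAt_cos (t/2)).comp t ((hasDerivAt_id t).div_const 2)
  simpa [Function.comp_def] using this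

lemma dF1 (t : ℝ) : HasDerivAt F1 (G1 t) t := by
  have h := (((hs2 t).const_mul cc).mul (Real.hasDerivAt_cos t)).sub
    ((hc2 t).mul (Real.hasDerivAt_sin t))
  refine h.congr_deriv ?_
  unfold G1; ring

lemma dF2 (t : ℝ) : HasDerivAt F2 (G2 t) t := by
  have h := (((hs2 t).const_mul cc).mul (Real.hasDerivAt_sin t)).add
    ((hc2 t).mul (Real.hasDerivAt_cos t))
  refine h.congr_deriv ?_
  unfold G2; ring

lemma dG1 (t : ℝ) : HasDerivAt G1 (H1 t) t := by
  have h := (((((hc2 t).const_mul (cc/2)).mul (Real.hasDerivAt_cos t)).sub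
    (((hs2 t).const_mul cc).mul (Real.hasDerivAt_sin t))).add
    (((hs2 t).const_mul (1/2)).mul (Real.hasDerivAt_sin t))).sub
    ((hc2 t).mul (Real.hasDerivAt_cos t))
  refine h.congr_deriv ?_
  unfold H1; ring

lemma dG2 (t : ℝ) : HasDerivAt G2 (H2 t) t := by
  have h := (((((hc2 t).const_mul (cc/2)).mul (Real.hasDerivAt_sin t)).add
    (((hs2 t).const_mul cc).mul (Real.hasDerivAt_cos t))).sub
    (((hs2 t).const_mul (1/2)).mul (Real.hasDerivAt_cos t))).sub
    ((hc2 t).mul (Real.hasDerivAt_sin t))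
  refine h.congr_deriv ?_
  unfold H2; ring

lemma x0_eq : x₀ = fun t => ![F1 t, F2 t] := by
  funext t i
  fin_cases i <;>
    simp [x₀, Rmat, zvec, Matrix.mulVec, dotProduct, Fin.sum_univ_two, F1, F2, cc] <;>
    ring

lemma deriv_x0 : deriv x₀ = fun t => ![G1 t, G2 t] := by
  funext t
  rw [x0_eq]
  apply HasDerivAt.deriv
  rw [hasDerivAt_pi]
  intro i
  fin_cases i
  · simpa using dF1 t
  · simpa using dF2 t

lemma deriv2_x0 (t : ℝ) : deriv (deriv x₀) t = ![H1 t, H2 t] := by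
  rw [deriv_x0]
  apply HasDerivAt.deriv
  rw [hasDerivAt_pi]
  intro i
  fin_cases i
  · simpa using dG1 t
  · simpa using dG2 t

/-- x₀(t) = R(t)z(t) is a nonzero anti-periodic solution of A(3/4,0)x = 0, where
A(3/4,0)x = -x'' - x + (1/2)(3I₂ + (√33/2)S(t))x (note √(9-3/4) = √33/2). -/
theorem x0_in_kernel :
    x₀ ≠ 0 ∧
    (∀ t : ℝ, x₀ (t + 2 * Real.pi) = -x₀ t) ∧
    (∀ t : ℝ, -(deriv (deriv x₀) t) - x₀ t +
      (1 / 2 : ℝ) • (((3 : ℝ) • (1 : Matrix (Fin 2) (Fin 2) ℝ)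
        + (Real.sqrt 33 / 2) • Smat t).mulVec (x₀ t)) = 0) := by

  refine ⟨?_, ?_, ?_⟩
  · intro h
    have := congrFun (congrFun h 0) 1
    simp [x₀, Rmat, zvec, Matrix.mulVec, dotProduct, Fin.sum_univ_two] at this
  · intro t
    funext i
    have h2 : (t + 2 * Real.pi) / 2 = t / 2 + Real.pi := by ring
    fin_cases i <;>
      simp [x₀, Rmat, zvec, Matrix.mulVec, dotProduct, Fin.sum_univ_two, h2,
        Real.sin_add_two_pi, Real.cos_add_two_pi, Real.sin_add_pi, Real.cos_add_pi] <;>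
      ring
  · intro t
    have hsin : sin t = 2 * sin (t/2) * cos (t/2) := by
      rw [show t = 2 * (t/2) by ring, Real.sin_two_mul]
      norm_num
    have hcos : cos t = 2 * cos (t/2)^2 - 1 := by
      rw [show t = 2 * (t/2) by ring, Real.cos_two_mul]
      norm_num
    have hsin2 : sin (2*t) = 2 * sin t * cos t := Real.sin_two_mul t
    have hcos2 : cos (2*t) = 2 * cos t ^2 - 1 := Real.cos_two_mul t
    have hp : sin (t/2)^2 + cos (t/2)^2 = 1 := Real.sin_sq_add_cos_sq _
    have hr : Real.sqrt 33 ^ 2 = 33 := Real.sq_sqrt (by norm_num)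
    rw [deriv2_x0, x0_eq]
    funext i
    fin_cases i <;>
      simp only [Smat, Matrix.mulVec, dotProduct, Fin.sum_univ_two,
        Matrix.add_apply, Matrix.smul_apply, Matrix.one_apply, Pi.add_apply, Pi.neg_apply,
        Pi.smul_apply, Pi.sub_apply, Pi.zero_apply, Matrix.cons_val_zero, Matrix.cons_val_one,
        Matrix.head_cons, Matrix.cons_val', Matrix.empty_val', Matrix.cons_val_fin_one,
        Matrix.of_apply, smul_eq_mul, H1, H2, F1, F2, cc] <;>
      rw [hsin2, hcos2, hsin, hcos] <;>
      norm_num [Matrix.vecHead, Matrix.vecTail]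
    · set s := sin (t/2); set c := cos (t/2); set r := Real.sqrt 33
      linear_combination ((33/2)*s*c^2 + (-7/2)*s*c^2*r + (-33)*s*c^4 + (7)*s*c^4*r) * hp
        + ((1/16)*s + (-5/8)*s*c^2 + (3/2)*s*c^4 + (-1)*s*c^6 + (1/2)*s^3*c^2 + (-1)*s^3*c^4) * hr
    · set s := sin (t/2); set c := cos (t/2); set r := Real.sqrt 33
      linear_combination ((2)*c^3*r + (-4)*c^5*r) * hp + ((-1/8)*s^2*c) * hr
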